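/- arXiv:1910.09689 — 5 statements merged into one kernel-verified Lean document; each statement's English description precedes it below -/
import Mathlib

section
/- Let a : ℝ² → ℝ² be continuously differentiable and ψ : ℝ² → ℂ be twice continuously differentiable. Then for every x ∈ ℝ², the Weitzenböck-type identity −Δ_aψ(x) = 4·∂_a†(∂_aψ)(x) + (curl a)(x)·ψ(x) holds. -/
noncomputable section

open Complex

/-- First partial derivative of a complex-valued function on ℝ². -/
def pd1 (f : ℝ × ℝ → ℂ) (x : ℝ × ℝ) : ℂ := fderiv ℝ f x (1, 0)

/-- Second partial derivative of a complex-valued function on ℝ². -/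
def pd2 (f : ℝ × ℝ → ℂ) (x : ℝ × ℝ) : ℂ := fderiv ℝ f x (0, 1)

/-- First partial derivative of a real-valued function on ℝ². -/
def pd1r (f : ℝ × ℝ → ℝ) (x : ℝ × ℝ) : ℝ := fderiv ℝ f x (1, 0)

/-- Second partial derivative of a real-valued function on ℝ². -/
def pd2r (f : ℝ × ℝ → ℝ) (x : ℝ × ℝ) : ℝ := fderiv ℝ f x (0, 1)

/-- Covariant derivative D₁ψ = ∂₁ψ + i·a₁·ψ. -/
def covD1 (a : ℝ × ℝ → ℝ × ℝ) (ψ : ℝ × ℝ → ℂ) (x : ℝ × ℝ) : ℂ :=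
  pd1 ψ x + Complex.I * ((a x).1 : ℂ) * ψ x

/-- Covariant derivative D₂ψ = ∂₂ψ + i·a₂·ψ. -/
def covD2 (a : ℝ × ℝ → ℝ × ℝ) (ψ : ℝ × ℝ → ℂ) (x : ℝ × ℝ) : ℂ :=
  pd2 ψ x + Complex.I * ((a x).2 : ℂ) * ψ x

/-- curl a = ∂₁a₂ − ∂₂a₁. -/
def curl2 (a : ℝ × ℝ → ℝ × ℝ) (x : ℝ × ℝ) : ℝ :=
  pd1r (fun y => (a y).2) x - pd2r (fun y => (a y).1) x


/-- Magnetic Laplacian Δ_aψ = D₁(D₁ψ) + D₂(D₂ψ). -/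
def magLap (a : ℝ × ℝ → ℝ × ℝ) (ψ : ℝ × ℝ → ℂ) (x : ℝ × ℝ) : ℂ :=
  covD1 a (covD1 a ψ) x + covD2 a (covD2 a ψ) x

/-- Complexified covariant derivative ∂_aψ = (1/2)(D₁ψ − i·D₂ψ). -/
def delA (a : ℝ × ℝ → ℝ × ℝ) (ψ : ℝ × ℝ → ℂ) (x : ℝ × ℝ) : ℂ :=
  (1 / 2 : ℂ) * (covD1 a ψ x - Complex.I * covD2 a ψ x)

/-- Formal adjoint ∂_a†ψ = −(1/2)(D₁ψ + i·D₂ψ). -/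
def delAdag (a : ℝ × ℝ → ℝ × ℝ) (ψ : ℝ × ℝ → ℂ) (x : ℝ × ℝ) : ℂ :=
  -(1 / 2 : ℂ) * (covD1 a ψ x + Complex.I * covD2 a ψ x)

/-! With `D₁, D₂` the covariant derivatives, `4 ∂_a† ∂_a = -(D₁ + i D₂)(D₁ - i D₂) = -Δ_a + i [D₁, D₂]`,
and `[D₁, D₂] ψ = i (curl a) ψ`: in the commutator the second derivatives of `ψ` cancel by symmetry
of the Hessian and the products `a_j ∂_k ψ` cancel in pairs, leaving only the derivatives of `a`. -/

section CovariantDerivative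

variable {E : Type*} [NormedAddCommGroup E] [NormedSpace ℝ E]
  {A B : E → ℝ} {ψ f g : E → ℂ} {x : E}

/-- `∂_v ψ + i A ψ`, where `A` stands for the component of the vector potential along `v`. -/
def covDeriv (A : E → ℝ) (v : E) (ψ : E → ℂ) (x : E) : ℂ :=
  fderiv ℝ ψ x v + I * (A x : ℂ) * ψ x

lemma covDeriv_sub (hf : DifferentiableAt ℝ f x) (hg : DifferentiableAt ℝ g x) (v : E) :
    covDeriv A v (fun y => f y - g y) x = covDeriv A v f x - covDeriv A v g x := by
  simp only [covDeriv, fderiv_fun_sub hf hg, sub_apply]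
  ring

lemma covDeriv_const_mul (hf : DifferentiableAt ℝ f x) (c : ℂ) (v : E) :
    covDeriv A v (fun y => c * f y) x = c * covDeriv A v f x := by
  simp only [covDeriv, fderiv_const_mul hf, smul_apply, smul_eq_mul]
  ring

lemma hasFDerivAt_fderiv_apply (hψ : ContDiffAt ℝ 2 ψ x) (w : E) :
    HasFDerivAt (fun y => fderiv ℝ ψ y w) ((fderiv ℝ (fderiv ℝ ψ) x).flip w) x := by
  simpa using ((hψ.fderiv_right (m := 1) le_rfl).differentiableAt one_ne_zero).hasFDerivAt.clm_apply
    (hasFDerivAt_const w x)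

lemma differentiableAt_covDeriv (hA : DifferentiableAt ℝ A x) (hψ : ContDiffAt ℝ 2 ψ x)
    (v : E) : DifferentiableAt ℝ (covDeriv A v ψ) x :=
  (hasFDerivAt_fderiv_apply hψ v).differentiableAt.add <|
    ((differentiableAt_const I).mul (ofRealCLM.differentiableAt.comp x hA)).mul
      (hψ.differentiableAt two_ne_zero)

lemma fderiv_covDeriv_apply (hB : DifferentiableAt ℝ B x) (hψ : ContDiffAt ℝ 2 ψ x) (v w : E) :
    fderiv ℝ (covDeriv B w ψ) x v = fderiv ℝ (fderiv ℝ ψ) x v w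
      + I * (fderiv ℝ B x v : ℂ) * ψ x + I * (B x : ℂ) * fderiv ℝ ψ x v := by
  have hB' : HasFDerivAt (fun y => (B y : ℂ)) (ofRealCLM.comp (fderiv ℝ B x)) x :=
    ofRealCLM.hasFDerivAt.comp x hB.hasFDerivAt
  have h : HasFDerivAt (covDeriv B w ψ) _ x := (hasFDerivAt_fderiv_apply hψ w).add
    ((hB'.const_mul I).mul (hψ.differentiableAt two_ne_zero).hasFDerivAt)
  rw [h.fderiv]
  simp only [add_apply, ContinuousLinearMap.flip_apply, smul_apply, smul_eq_mul,
    ContinuousLinearMap.comp_apply, ofRealCLM_apply]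
  ring

lemma covDeriv_comm (hA : DifferentiableAt ℝ A x) (hB : DifferentiableAt ℝ B x)
    (hψ : ContDiffAt ℝ 2 ψ x) (v w : E) :
    covDeriv A v (covDeriv B w ψ) x - covDeriv B w (covDeriv A v ψ) x
      = I * ((fderiv ℝ B x v - fderiv ℝ A x w : ℝ) : ℂ) * ψ x := by
  rw [covDeriv.eq_1 A v (covDeriv B w ψ), covDeriv.eq_1 B w (covDeriv A v ψ),
    fderiv_covDeriv_apply hB hψ, fderiv_covDeriv_apply hA hψ,
    (hψ.isSymmSndFDerivAt (by simp)).eq v w]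
  simp only [covDeriv]
  push_cast
  ring

end CovariantDerivative

section Plane

variable {a : ℝ × ℝ → ℝ × ℝ} {ψ : ℝ × ℝ → ℂ} {x : ℝ × ℝ}

lemma covD1_eq_covDeriv (a : ℝ × ℝ → ℝ × ℝ) (ψ : ℝ × ℝ → ℂ) :
    covD1 a ψ = covDeriv (fun y => (a y).1) (1, 0) ψ := rfl

lemma covD2_eq_covDeriv (a : ℝ × ℝ → ℝ × ℝ) (ψ : ℝ × ℝ → ℂ) :
    covD2 a ψ = covDeriv (fun y => (a y).2) (0, 1) ψ := rfl

lemma covD1_covD2_sub_covD2_covD1 (ha : DifferentiableAt ℝ a x) (hψ : ContDiffAt ℝ 2 ψ x) :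
    covD1 a (covD2 a ψ) x - covD2 a (covD1 a ψ) x = I * curl2 a x * ψ x := by
  simp only [covD1_eq_covDeriv, covD2_eq_covDeriv]
  rw [covDeriv_comm ha.fst ha.snd hψ]
  rfl

lemma covDeriv_delA (ha : DifferentiableAt ℝ a x) (hψ : ContDiffAt ℝ 2 ψ x) (A : ℝ × ℝ → ℝ)
    (v : ℝ × ℝ) : covDeriv A v (delA a ψ) x
      = 1 / 2 * (covDeriv A v (covD1 a ψ) x - I * covDeriv A v (covD2 a ψ) x) := by
  have hD₁ : DifferentiableAt ℝ (covD1 a ψ) x := differentiableAt_covDeriv ha.fst hψ _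
  have hD₂ : DifferentiableAt ℝ (covD2 a ψ) x := differentiableAt_covDeriv ha.snd hψ _
  rw [show delA a ψ = fun y => 1 / 2 * (covD1 a ψ y - I * covD2 a ψ y) from rfl,
    covDeriv_const_mul (f := fun y => covD1 a ψ y - I * covD2 a ψ y) (hD₁.sub (hD₂.const_mul I)),
    covDeriv_sub (g := fun y => I * covD2 a ψ y) hD₁ (hD₂.const_mul I),
    covDeriv_const_mul hD₂]

lemma four_mul_delAdag_delA (ha : DifferentiableAt ℝ a x) (hψ : ContDiffAt ℝ 2 ψ x) :
    4 * delAdag a (delA a ψ) x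
      = -magLap a ψ x + I * (covD1 a (covD2 a ψ) x - covD2 a (covD1 a ψ) x) := by
  rw [delAdag, magLap, covD1_eq_covDeriv a (delA a ψ), covD2_eq_covDeriv a (delA a ψ),
    covDeriv_delA ha hψ, covDeriv_delA ha hψ]
  simp only [← covD1_eq_covDeriv, ← covD2_eq_covDeriv]
  linear_combination covD2 a (covD2 a ψ) x * I_sq

end Plane

/-- Weitzenböck-type identity: `−Δ_aψ = 4·∂_a†(∂_aψ) + (curl a)·ψ`. -/
theorem weitzenboeck_identity
    (a : ℝ × ℝ → ℝ × ℝ) (ψ : ℝ × ℝ → ℂ)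
    (ha : ContDiff ℝ 1 a) (hψ : ContDiff ℝ 2 ψ) :
    ∀ x : ℝ × ℝ,
      -(magLap a ψ x) = 4 * delAdag a (delA a ψ) x + (curl2 a x : ℂ) * ψ x := by
  intro x
  have hax : DifferentiableAt ℝ a x := ha.differentiable one_ne_zero x
  rw [four_mul_delAdag_delA hax hψ.contDiffAt, covD1_covD2_sub_covD2_covD1 hax hψ.contDiffAt]
  linear_combination (-(curl2 a x * ψ x) : ℂ) * I_sq
end
end

section
/- Let b ≥ 0 and let a : ℝ² → ℝ² be continuously differentiable with curl a(x) = b for every x ∈ ℝ². Then for every smooth compactly supported ψ : ℝ² → ℂ, ∫_{ℝ²} (|D₁ψ|² + |D₂ψ|²) dx ≥ b·∫_{ℝ²} |ψ|² dx; that is, the quadratic form of the magnetic Laplacian −Δ_a with constant magnetic field b is bounded below by b. -/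
noncomputable section

open Complex

open MeasureTheory

section Aux

lemma int1d (f : ℝ → ℂ) (hf : ContDiff ℝ 1 f) (h2f : HasCompactSupport f) :
    ∫ x : ℝ, deriv f x = 0 := by
  have hint : Integrable (deriv f) :=
    (hf.continuous_deriv le_rfl).integrable_of_hasCompactSupport h2f.deriv
  rw [← intervalIntegral.integral_Iic_add_Ioi (b := 0) hint.integrableOn hint.integrableOn,
    h2f.integral_Iic_deriv_eq hf 0, h2f.integral_Ioi_deriv_eq hf 0]
  ring

lemma cont_pd (g : ℝ × ℝ → ℂ) (hg : ContDiff ℝ 1 g) (v : ℝ × ℝ) :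
    Continuous (fun x => fderiv ℝ g x v) :=
  (ContinuousLinearMap.apply ℝ ℂ v).continuous.comp (hg.continuous_fderiv one_ne_zero)

lemma integral_pd1_eq_zero (g : ℝ × ℝ → ℂ) (hg : ContDiff ℝ 1 g)
    (h2g : HasCompactSupport g) : ∫ x : ℝ × ℝ, fderiv ℝ g x (1, 0) = 0 := by
  have hint : Integrable (fun x => fderiv ℝ g x ((1:ℝ), (0:ℝ))) :=
    (cont_pd g hg _).integrable_of_hasCompactSupport (h2g.fderiv_apply ℝ _)
  rw [show (volume : Measure (ℝ × ℝ)) = (volume : Measure ℝ).prod volume from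
    Measure.volume_eq_prod _ _] at hint ⊢
  rw [MeasureTheory.integral_prod_symm _ hint]
  have : ∀ y : ℝ, ∫ t : ℝ, fderiv ℝ g (t, y) (1, 0) = 0 := by
    intro y
    have hcomp : ContDiff ℝ 1 (fun t : ℝ => g (t, y)) :=
      hg.comp (contDiff_id.prodMk contDiff_const)
    have hsupp : HasCompactSupport (fun t : ℝ => g (t, y)) := by
      apply HasCompactSupport.intro (h2g.image continuous_fst)
      intro t ht
      by_contra h
      exact ht ⟨(t, y), subset_tsupport _ h, rfl⟩
    have hd : ∀ t : ℝ, deriv (fun s : ℝ => g (s, y)) t = fderiv ℝ g (t, y) (1, 0) := by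
      intro t
      have h1 : HasDerivAt (fun s : ℝ => (s, y)) ((1:ℝ), (0:ℝ)) t :=
        (hasDerivAt_id t).prodMk (hasDerivAt_const t y)
      exact ((hg.differentiable one_ne_zero (t, y)).hasFDerivAt.comp_hasDerivAt t h1).deriv
    rw [← integral_congr_ae (Filter.EventuallyEq.of_eq (funext hd))]
    exact int1d _ hcomp hsupp
  simp [this]

lemma integral_pd2_eq_zero (g : ℝ × ℝ → ℂ) (hg : ContDiff ℝ 1 g)
    (h2g : HasCompactSupport g) : ∫ x : ℝ × ℝ, fderiv ℝ g x (0, 1) = 0 := by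
  have hint : Integrable (fun x => fderiv ℝ g x ((0:ℝ), (1:ℝ))) :=
    (cont_pd g hg _).integrable_of_hasCompactSupport (h2g.fderiv_apply ℝ _)
  rw [show (volume : Measure (ℝ × ℝ)) = (volume : Measure ℝ).prod volume from
    Measure.volume_eq_prod _ _] at hint ⊢
  rw [MeasureTheory.integral_prod _ hint]
  have : ∀ y : ℝ, ∫ t : ℝ, fderiv ℝ g (y, t) (0, 1) = 0 := by
    intro y
    have hcomp : ContDiff ℝ 1 (fun t : ℝ => g (y, t)) :=
      hg.comp (contDiff_const.prodMk contDiff_id)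
    have hsupp : HasCompactSupport (fun t : ℝ => g (y, t)) := by
      apply HasCompactSupport.intro (h2g.image continuous_snd)
      intro t ht
      by_contra h
      exact ht ⟨(y, t), subset_tsupport _ h, rfl⟩
    have hd : ∀ t : ℝ, deriv (fun s : ℝ => g (y, s)) t = fderiv ℝ g (y, t) (0, 1) := by
      intro t
      have h1 : HasDerivAt (fun s : ℝ => (y, s)) ((0:ℝ), (1:ℝ)) t :=
        (hasDerivAt_const t y).prodMk (hasDerivAt_id t)
      exact ((hg.differentiable one_ne_zero (y, t)).hasFDerivAt.comp_hasDerivAt t h1).deriv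
    rw [← integral_congr_ae (Filter.EventuallyEq.of_eq (funext hd))]
    exact int1d _ hcomp hsupp
  simp [this]

lemma pdv_mul {f g : ℝ × ℝ → ℂ} {x v : ℝ × ℝ} (hf : DifferentiableAt ℝ f x)
    (hg : DifferentiableAt ℝ g x) :
    fderiv ℝ (fun y => f y * g y) x v = fderiv ℝ f x v * g x + f x * fderiv ℝ g x v := by
  rw [fderiv_fun_mul hf hg]
  simp only [ContinuousLinearMap.add_apply, ContinuousLinearMap.smul_apply, smul_eq_mul]; ring

lemma pdv_sub {f g : ℝ × ℝ → ℂ} {x v : ℝ × ℝ} (hf : DifferentiableAt ℝ f x)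
    (hg : DifferentiableAt ℝ g x) :
    fderiv ℝ (fun y => f y - g y) x v = fderiv ℝ f x v - fderiv ℝ g x v := by
  rw [fderiv_fun_sub hf hg]; rfl

lemma pdv_add {f g : ℝ × ℝ → ℂ} {x v : ℝ × ℝ} (hf : DifferentiableAt ℝ f x)
    (hg : DifferentiableAt ℝ g x) :
    fderiv ℝ (fun y => f y + g y) x v = fderiv ℝ f x v + fderiv ℝ g x v := by
  rw [fderiv_fun_add hf hg]; rfl

lemma pdv_neg {f : ℝ × ℝ → ℂ} {x v : ℝ × ℝ} :
    fderiv ℝ (fun y => -(f y)) x v = -(fderiv ℝ f x v) := by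
  rw [fderiv_fun_neg]; rfl

lemma pdv_const_mul {f : ℝ × ℝ → ℂ} {x v : ℝ × ℝ} (c : ℂ) (hf : DifferentiableAt ℝ f x) :
    fderiv ℝ (fun y => c * f y) x v = c * fderiv ℝ f x v := by
  rw [fderiv_const_mul hf]; rfl

lemma pdv_conj {f : ℝ × ℝ → ℂ} {x v : ℝ × ℝ} (hf : DifferentiableAt ℝ f x) :
    fderiv ℝ (fun y => (starRingEnd ℂ) (f y)) x v = (starRingEnd ℂ) (fderiv ℝ f x v) := by
  have h : fderiv ℝ (fun y => (starRingEnd ℂ) (f y)) x =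
      Complex.conjCLE.toContinuousLinearMap.comp (fderiv ℝ f x) :=
    (Complex.conjCLE.toContinuousLinearMap.hasFDerivAt.comp x hf.hasFDerivAt).fderiv
  rw [h]; rfl

lemma pdv_ofReal {r : ℝ × ℝ → ℝ} {x v : ℝ × ℝ} (hr : DifferentiableAt ℝ r x) :
    fderiv ℝ (fun y => ((r y : ℝ) : ℂ)) x v = ((fderiv ℝ r x v : ℝ) : ℂ) := by
  have h : fderiv ℝ (fun y => ((r y : ℝ) : ℂ)) x =
      Complex.ofRealCLM.comp (fderiv ℝ r x) :=
    (Complex.ofRealCLM.hasFDerivAt.comp x hr.hasFDerivAt).fderiv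
  rw [h]; rfl

lemma pd_symm {ψ : ℝ × ℝ → ℂ} (hψ : ContDiff ℝ (⊤ : ℕ∞) ψ) (x v w : ℝ × ℝ) :
    fderiv ℝ (fun y => fderiv ℝ ψ y w) x v = fderiv ℝ (fun y => fderiv ℝ ψ y v) x w := by
  have hs : IsSymmSndFDerivAt ℝ ψ x := hψ.contDiffAt.isSymmSndFDerivAt (by
    rw [minSmoothness_of_isRCLikeNormedField]; exact (WithTop.coe_le_coe (a := ⊤) (b := (2 : ℕ∞))).mpr le_top)
  have hd : DifferentiableAt ℝ (fderiv ℝ ψ) x :=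
    (hψ.fderiv_right (m := (⊤ : ℕ∞)) (by simp)).differentiable (by simp) x
  have h1 : ∀ u : ℝ × ℝ, fderiv ℝ (fun y => fderiv ℝ ψ y u) x =
      (ContinuousLinearMap.apply ℝ ℂ u).comp (fderiv ℝ (fderiv ℝ ψ) x) := fun u =>
    ((ContinuousLinearMap.apply ℝ ℂ u).hasFDerivAt.comp x hd.hasFDerivAt).fderiv
  rw [h1 v, h1 w]
  exact hs v w

end Aux

/-- Lower bound for the quadratic form of the magnetic Laplacian with constant
magnetic field `b`: `∫ (|D₁ψ|² + |D₂ψ|²) ≥ b·∫ |ψ|²`. -/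
theorem magnetic_laplacian_lower_bound
    (b : ℝ) (hb : 0 ≤ b) (a : ℝ × ℝ → ℝ × ℝ)
    (ha : ContDiff ℝ 1 a) (hcurl : ∀ x : ℝ × ℝ, curl2 a x = b) :
    ∀ ψ : ℝ × ℝ → ℂ, ContDiff ℝ (⊤ : ℕ∞) ψ → HasCompactSupport ψ →
      b * ∫ x : ℝ × ℝ, ‖ψ x‖ ^ 2
        ≤ ∫ x : ℝ × ℝ, (‖covD1 a ψ x‖ ^ 2 + ‖covD2 a ψ x‖ ^ 2) := by
  intro ψ hψ hψc
  -- basic smoothness facts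
  have hψ1 : ContDiff ℝ 1 ψ := hψ.of_le (by simp)
  have hF : ContDiff ℝ (⊤ : ℕ∞) (fderiv ℝ ψ) := hψ.fderiv_right (by simp)
  have hp : ContDiff ℝ (⊤ : ℕ∞) (fun x => fderiv ℝ ψ x (1, 0)) := hF.clm_apply contDiff_const
  have hq : ContDiff ℝ (⊤ : ℕ∞) (fun x => fderiv ℝ ψ x (0, 1)) := hF.clm_apply contDiff_const
  have hc : ContDiff ℝ (⊤ : ℕ∞) (fun x => (starRingEnd ℂ) (ψ x)) :=
    Complex.conjCLE.toContinuousLinearMap.contDiff.comp hψ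
  have ha1 : ContDiff ℝ 1 (fun x => (a x).1) := contDiff_fst.comp ha
  have ha2 : ContDiff ℝ 1 (fun x => (a x).2) := contDiff_snd.comp ha
  have hA1 : ContDiff ℝ 1 (fun x => ((a x).1 : ℂ)) := Complex.ofRealCLM.contDiff.comp ha1
  have hA2 : ContDiff ℝ 1 (fun x => ((a x).2 : ℂ)) := Complex.ofRealCLM.contDiff.comp ha2
  -- the two "divergence" functions
  set G₁ : ℝ × ℝ → ℂ := fun y =>
    Complex.I * ((starRingEnd ℂ) (ψ y) * fderiv ℝ ψ y (0, 1)) -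
      ((a y).2 : ℂ) * ((starRingEnd ℂ) (ψ y) * ψ y) with hG₁def
  set G₂ : ℝ × ℝ → ℂ := fun y =>
    -(Complex.I * ((starRingEnd ℂ) (ψ y) * fderiv ℝ ψ y (1, 0))) +
      ((a y).1 : ℂ) * ((starRingEnd ℂ) (ψ y) * ψ y) with hG₂def
  have hG₁ : ContDiff ℝ 1 G₁ :=
    ((contDiff_const.mul ((hc.mul hq).of_le (by simp))).sub
      (hA2.mul ((hc.mul hψ).of_le (by simp))))
  have hG₂ : ContDiff ℝ 1 G₂ :=
    (((contDiff_const.mul ((hc.mul hp).of_le (by simp))).neg).add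
      (hA1.mul ((hc.mul hψ).of_le (by simp))))
  have hG₁c : HasCompactSupport G₁ := by
    apply HasCompactSupport.intro hψc
    intro x hx
    simp [hG₁def, image_eq_zero_of_notMem_tsupport hx]
  have hG₂c : HasCompactSupport G₂ := by
    apply HasCompactSupport.intro hψc
    intro x hx
    simp [hG₂def, image_eq_zero_of_notMem_tsupport hx]
  have hkey : ∀ x : ℝ × ℝ,
      fderiv ℝ G₁ x (1, 0) + fderiv ℝ G₂ x (0, 1) + (b : ℂ) * ((starRingEnd ℂ) (ψ x) * ψ x)
        = Complex.I * (starRingEnd ℂ) (covD1 a ψ x) * covD2 a ψ x +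
          (starRingEnd ℂ) (Complex.I * (starRingEnd ℂ) (covD1 a ψ x) * covD2 a ψ x) := by
    intro x
    have dψ : DifferentiableAt ℝ ψ x := hψ1.differentiable one_ne_zero x
    have dc : DifferentiableAt ℝ (fun y => (starRingEnd ℂ) (ψ y)) x :=
      (hc.differentiable (by simp)) x
    have dp : DifferentiableAt ℝ (fun y => fderiv ℝ ψ y (1, 0)) x :=
      (hp.differentiable (by simp)) x
    have dq : DifferentiableAt ℝ (fun y => fderiv ℝ ψ y (0, 1)) x :=
      (hq.differentiable (by simp)) x
    have da1 : DifferentiableAt ℝ (fun y => (a y).1) x := ha1.differentiable one_ne_zero x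
    have da2 : DifferentiableAt ℝ (fun y => (a y).2) x := ha2.differentiable one_ne_zero x
    have dA1 : DifferentiableAt ℝ (fun y => ((a y).1 : ℂ)) x := hA1.differentiable one_ne_zero x
    have dA2 : DifferentiableAt ℝ (fun y => ((a y).2 : ℂ)) x := hA2.differentiable one_ne_zero x
    have dm1 : DifferentiableAt ℝ
        (fun y => Complex.I * ((starRingEnd ℂ) (ψ y) * fderiv ℝ ψ y (0, 1))) x :=
      (dc.mul dq).const_mul _
    have dm2 : DifferentiableAt ℝ
        (fun y => ((a y).2 : ℂ) * ((starRingEnd ℂ) (ψ y) * ψ y)) x := dA2.mul (dc.mul dψ)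
    have dm3 : DifferentiableAt ℝ
        (fun y => Complex.I * ((starRingEnd ℂ) (ψ y) * fderiv ℝ ψ y (1, 0))) x :=
      (dc.mul dp).const_mul _
    have dm4 : DifferentiableAt ℝ
        (fun y => ((a y).1 : ℂ) * ((starRingEnd ℂ) (ψ y) * ψ y)) x := dA1.mul (dc.mul dψ)
    rw [hG₁def, hG₂def]
    rw [pdv_sub dm1 dm2, pdv_add dm3.fun_neg dm4]
    simp only [pdv_neg, pdv_const_mul _ (dc.fun_mul dq), pdv_const_mul _ (dc.fun_mul dp),
      pdv_mul dc dq, pdv_mul dc dp, pdv_mul dA2 (dc.fun_mul dψ), pdv_mul dA1 (dc.fun_mul dψ),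
      pdv_mul dc dψ, pdv_conj dψ, pdv_ofReal da1, pdv_ofReal da2]
    rw [pd_symm hψ x (1, 0) (0, 1)]
    have hcx : fderiv ℝ (fun y => (a y).2) x (1, 0)
        = b + fderiv ℝ (fun y => (a y).1) x (0, 1) := by
      have := hcurl x
      simp only [curl2, pd1r, pd2r] at this
      linarith
    rw [hcx]
    have hI3 : Complex.I ^ 3 = -Complex.I := by
      rw [pow_succ, Complex.I_sq]; ring
    simp only [covD1, covD2, pd1, pd2, map_add, map_mul, map_neg, Complex.conj_conj,
      Complex.conj_I, Complex.conj_ofReal, Complex.ofReal_add, neg_neg]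
    ring_nf
    simp only [Complex.I_sq, hI3]
    ring
  -- continuity and support of the covariant derivatives
  have hcu : Continuous (covD1 a ψ) := by
    have : Continuous (fun x => fderiv ℝ ψ x ((1:ℝ), (0:ℝ))) := cont_pd ψ hψ1 _
    exact (this.add ((continuous_const.mul
      (Complex.continuous_ofReal.comp (continuous_fst.comp ha.continuous))).mul hψ.continuous))
  have hcv : Continuous (covD2 a ψ) := by
    have : Continuous (fun x => fderiv ℝ ψ x ((0:ℝ), (1:ℝ))) := cont_pd ψ hψ1 _
    exact (this.add ((continuous_const.mul
      (Complex.continuous_ofReal.comp (continuous_snd.comp ha.continuous))).mul hψ.continuous))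
  have hzero : ∀ x ∉ tsupport ψ, ψ x = 0 ∧ fderiv ℝ ψ x = 0 := fun x hx =>
    ⟨image_eq_zero_of_notMem_tsupport hx, fderiv_of_notMem_tsupport ℝ hx⟩
  have hsu : HasCompactSupport (covD1 a ψ) := by
    apply HasCompactSupport.intro hψc
    intro x hx
    simp [covD1, pd1, (hzero x hx).1, (hzero x hx).2]
  have hsv : HasCompactSupport (covD2 a ψ) := by
    apply HasCompactSupport.intro hψc
    intro x hx
    simp [covD2, pd2, (hzero x hx).1, (hzero x hx).2]
  -- the cross term
  set F : ℝ × ℝ → ℝ := fun x =>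
    2 * (Complex.I * (starRingEnd ℂ) (covD1 a ψ x) * covD2 a ψ x).re with hFdef
  have hcF : Continuous F := by
    apply continuous_const.mul
    exact Complex.continuous_re.comp ((continuous_const.mul
      (Complex.continuous_conj.comp hcu)).mul hcv)
  have hsF : HasCompactSupport F := by
    apply HasCompactSupport.intro (hsu.union hsv)
    intro x hx
    have h1 : covD1 a ψ x = 0 := by
      by_contra h
      exact hx (Or.inl (subset_tsupport _ h))
    simp [hFdef, h1]
  have hiF : Integrable F := hcF.integrable_of_hasCompactSupport hsF
  -- integrability of the other players
  have hin : Integrable (fun x : ℝ × ℝ => ‖ψ x‖ ^ 2) :=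
    (hψ.continuous.norm.pow 2).integrable_of_hasCompactSupport (by
      apply HasCompactSupport.intro hψc
      intro x hx
      simp [(hzero x hx).1])
  have hiRHS : Integrable (fun x : ℝ × ℝ => ‖covD1 a ψ x‖ ^ 2 + ‖covD2 a ψ x‖ ^ 2) :=
    ((hcu.norm.pow 2).add (hcv.norm.pow 2)).integrable_of_hasCompactSupport (by
      apply HasCompactSupport.intro (hsu.union hsv)
      intro x hx
      have h1 : covD1 a ψ x = 0 := by
        by_contra h; exact hx (Or.inl (subset_tsupport _ h))
      have h2 : covD2 a ψ x = 0 := by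
        by_contra h; exact hx (Or.inr (subset_tsupport _ h))
      simp [h1, h2])
  have hiG1 : Integrable (fun x : ℝ × ℝ => (fderiv ℝ G₁ x ((1:ℝ), (0:ℝ))).re) :=
    (Complex.continuous_re.comp (cont_pd G₁ hG₁ _)).integrable_of_hasCompactSupport
      ((hG₁c.fderiv_apply ℝ _).comp_left (g := Complex.re) rfl)
  have hiG2 : Integrable (fun x : ℝ × ℝ => (fderiv ℝ G₂ x ((0:ℝ), (1:ℝ))).re) :=
    (Complex.continuous_re.comp (cont_pd G₂ hG₂ _)).integrable_of_hasCompactSupport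
      ((hG₂c.fderiv_apply ℝ _).comp_left (g := Complex.re) rfl)
  -- real form of the key identity
  have hkey2 : ∀ x : ℝ × ℝ, F x = (fderiv ℝ G₁ x ((1:ℝ), (0:ℝ))).re +
      ((fderiv ℝ G₂ x ((0:ℝ), (1:ℝ))).re + b * ‖ψ x‖ ^ 2) := by
    intro x
    have h := congrArg Complex.re (hkey x)
    simp only [Complex.add_re, Complex.conj_re] at h
    have h2 : ((b : ℂ) * ((starRingEnd ℂ) (ψ x) * ψ x)).re = b * ‖ψ x‖ ^ 2 := by
      rw [mul_comm ((starRingEnd ℂ) (ψ x)), Complex.mul_conj, ← Complex.ofReal_mul]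
      rw [Complex.ofReal_re, Complex.normSq_eq_norm_sq]
    rw [h2] at h
    simp only [hFdef]
    linarith
  -- integral of F
  have hIG1 : (∫ x : ℝ × ℝ, (fderiv ℝ G₁ x ((1:ℝ), (0:ℝ))).re) = 0 := by
    have hint : Integrable (fun x : ℝ × ℝ => fderiv ℝ G₁ x ((1:ℝ), (0:ℝ))) :=
      (cont_pd G₁ hG₁ _).integrable_of_hasCompactSupport (hG₁c.fderiv_apply ℝ _)
    have := Complex.reCLM.integral_comp_comm hint
    simp only [Complex.reCLM_apply] at this
    rw [this, integral_pd1_eq_zero G₁ hG₁ hG₁c, Complex.zero_re]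
  have hIG2 : (∫ x : ℝ × ℝ, (fderiv ℝ G₂ x ((0:ℝ), (1:ℝ))).re) = 0 := by
    have hint : Integrable (fun x : ℝ × ℝ => fderiv ℝ G₂ x ((0:ℝ), (1:ℝ))) :=
      (cont_pd G₂ hG₂ _).integrable_of_hasCompactSupport (hG₂c.fderiv_apply ℝ _)
    have := Complex.reCLM.integral_comp_comm hint
    simp only [Complex.reCLM_apply] at this
    rw [this, integral_pd2_eq_zero G₂ hG₂ hG₂c, Complex.zero_re]
  have hIF : (∫ x : ℝ × ℝ, F x) = b * ∫ x : ℝ × ℝ, ‖ψ x‖ ^ 2 := by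
    have e1 : (∫ x : ℝ × ℝ, ((fderiv ℝ G₁ x ((1:ℝ), (0:ℝ))).re +
        ((fderiv ℝ G₂ x ((0:ℝ), (1:ℝ))).re + b * ‖ψ x‖ ^ 2)))
        = (∫ x : ℝ × ℝ, (fderiv ℝ G₁ x ((1:ℝ), (0:ℝ))).re) +
          ∫ x : ℝ × ℝ, ((fderiv ℝ G₂ x ((0:ℝ), (1:ℝ))).re + b * ‖ψ x‖ ^ 2) :=
      integral_add hiG1 (hiG2.add (hin.const_mul b))
    have e2 : (∫ x : ℝ × ℝ, ((fderiv ℝ G₂ x ((0:ℝ), (1:ℝ))).re + b * ‖ψ x‖ ^ 2))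
        = (∫ x : ℝ × ℝ, (fderiv ℝ G₂ x ((0:ℝ), (1:ℝ))).re) +
          ∫ x : ℝ × ℝ, b * ‖ψ x‖ ^ 2 :=
      integral_add hiG2 (hin.const_mul b)
    rw [integral_congr_ae (Filter.EventuallyEq.of_eq (funext hkey2)), e1, e2, hIG1, hIG2,
      MeasureTheory.integral_const_mul]
    ring
  -- pointwise bound
  have hpt : ∀ x : ℝ × ℝ, F x ≤ ‖covD1 a ψ x‖ ^ 2 + ‖covD2 a ψ x‖ ^ 2 := by
    intro x
    set z := covD1 a ψ x
    set w := covD2 a ψ x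
    have hz : ‖z‖ ^ 2 = z.re ^ 2 + z.im ^ 2 := by
      rw [Complex.sq_norm, Complex.normSq_apply]; ring
    have hw : ‖w‖ ^ 2 = w.re ^ 2 + w.im ^ 2 := by
      rw [Complex.sq_norm, Complex.normSq_apply]; ring
    have hre : (Complex.I * (starRingEnd ℂ) z * w).re = z.im * w.re - z.re * w.im := by
      simp [Complex.mul_re, Complex.mul_im]
      try ring
    rw [hFdef]
    simp only
    rw [hre, hz, hw]
    nlinarith [sq_nonneg (z.im - w.re), sq_nonneg (z.re + w.im)]
  calc b * ∫ x : ℝ × ℝ, ‖ψ x‖ ^ 2 = ∫ x : ℝ × ℝ, F x := hIF.symm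
    _ ≤ ∫ x : ℝ × ℝ, (‖covD1 a ψ x‖ ^ 2 + ‖covD2 a ψ x‖ ^ 2) :=
      integral_mono hiF hiRHS hpt
end
end

section
/- Let a : ℝ² → ℝ² be continuous and ψ : ℝ² → ℂ be continuously differentiable, and suppose ψ satisfies the first-order equation D₁ψ(x) = i·D₂ψ(x) for all x (equivalently ∂_aψ = 0). Then the supercurrent is a rotated gradient of the density: for all x, Im(conj(ψ)·D₁ψ)(x) = (1/2)·∂₂(|ψ|²)(x) and Im(conj(ψ)·D₂ψ)(x) = −(1/2)·∂₁(|ψ|²)(x); in vector form, Im(conj(ψ)·∇_aψ) = (1/2)·curl*(|ψ|²). -/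
noncomputable section

open Complex

/-! The gauge term of `Dⱼψ` contributes `i aⱼ |ψ|²` to `ψ̄ Dⱼψ`, which is purely imaginary, so
`∂ⱼ|ψ|² = 2 Re(ψ̄ Dⱼψ)`. Multiplying `D₁ψ = i D₂ψ` by `ψ̄` turns the real part of each of
`ψ̄ D₁ψ`, `ψ̄ D₂ψ` into the imaginary part of the other. -/

open ComplexConjugate

theorem DifferentiableAt.fderiv_norm_sq_apply {E : Type*} [NormedAddCommGroup E]
    [NormedSpace ℝ E] {f : E → ℂ} {x : E} (hf : DifferentiableAt ℝ f x) (v : E) :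
    fderiv ℝ (fun y => ‖f y‖ ^ 2) x v = 2 * (conj (f x) * fderiv ℝ f x v).re := by
  simp only [hf.hasFDerivAt.norm_sq.fderiv, smul_apply, ContinuousLinearMap.comp_apply,
    coe_innerSL_apply, Complex.inner, nsmul_eq_mul, Nat.cast_ofNat, mul_comm (fderiv ℝ f x v)]

theorem re_conj_mul_add_I_mul_ofReal_mul (z w : ℂ) (t : ℝ) :
    (conj z * (w + I * t * z)).re = (conj z * w).re := by
  simp only [mul_add, add_re, mul_re, mul_im, conj_re, conj_im, I_re, I_im, ofReal_re, ofReal_im]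
  ring

theorem pd1r_norm_sq {ψ : ℝ × ℝ → ℂ} {x : ℝ × ℝ} (hψ : DifferentiableAt ℝ ψ x)
    (a : ℝ × ℝ → ℝ × ℝ) :
    pd1r (fun y => ‖ψ y‖ ^ 2) x = 2 * (conj (ψ x) * covD1 a ψ x).re := by
  rw [covD1, re_conj_mul_add_I_mul_ofReal_mul]
  exact hψ.fderiv_norm_sq_apply (1, 0)

theorem pd2r_norm_sq {ψ : ℝ × ℝ → ℂ} {x : ℝ × ℝ} (hψ : DifferentiableAt ℝ ψ x)
    (a : ℝ × ℝ → ℝ × ℝ) :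
    pd2r (fun y => ‖ψ y‖ ^ 2) x = 2 * (conj (ψ x) * covD2 a ψ x).re := by
  rw [covD2, re_conj_mul_add_I_mul_ofReal_mul]
  exact hψ.fderiv_norm_sq_apply (0, 1)

theorem supercurrent_of_selfdual_general
    (a : ℝ × ℝ → ℝ × ℝ) (ψ : ℝ × ℝ → ℂ)
    (hψ : ContDiff ℝ 1 ψ)
    (hsd : ∀ x : ℝ × ℝ, covD1 a ψ x = Complex.I * covD2 a ψ x) :
    ∀ x : ℝ × ℝ,
      ((starRingEnd ℂ) (ψ x) * covD1 a ψ x).im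
          = (1 / 2) * pd2r (fun y => ‖ψ y‖ ^ 2) x
      ∧ ((starRingEnd ℂ) (ψ x) * covD2 a ψ x).im
          = -((1 / 2) * pd1r (fun y => ‖ψ y‖ ^ 2) x) := by
  intro x
  have hψx : DifferentiableAt ℝ ψ x := hψ.differentiable one_ne_zero x
  rw [pd2r_norm_sq hψx a, pd1r_norm_sq hψx a, hsd x, mul_left_comm, I_mul_im, I_mul_re]
  constructor <;> ring

/-- If `∂_aψ = 0` (i.e. `D₁ψ = i·D₂ψ`), then the supercurrent is the rotated
gradient of the density: `Im(conj(ψ)·∇_aψ) = (1/2)·curl*(|ψ|²)`. -/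
theorem supercurrent_of_selfdual
    (a : ℝ × ℝ → ℝ × ℝ) (ψ : ℝ × ℝ → ℂ)
    (ha : Continuous a) (hψ : ContDiff ℝ 1 ψ)
    (hsd : ∀ x : ℝ × ℝ, covD1 a ψ x = Complex.I * covD2 a ψ x) :
    ∀ x : ℝ × ℝ,
      ((starRingEnd ℂ) (ψ x) * covD1 a ψ x).im
          = (1 / 2) * pd2r (fun y => ‖ψ y‖ ^ 2) x
      ∧ ((starRingEnd ℂ) (ψ x) * covD2 a ψ x).im
          = -((1 / 2) * pd1r (fun y => ‖ψ y‖ ^ 2) x) :=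
  supercurrent_of_selfdual_general a ψ hψ hsd
end
end

section
/- Let a : ℝ² → ℝ² be continuously differentiable, a₀ : ℝ² → ℝ continuous, v : ℝ → ℝ any function, and let ψ : ℝ² → ℂ be twice continuously differentiable and satisfy the stationary ZHK equation −Δ_aψ + v(|ψ|²)·ψ − a₀·ψ = 0 on ℝ². Then the supercurrent is divergence free: ∂₁J₁ + ∂₂J₂ = 0 on ℝ². -/
noncomputable section

open Complex

/-- Supercurrent component J₁ = Im(conj(ψ)·D₁ψ). -/
def supJ1 (a : ℝ × ℝ → ℝ × ℝ) (ψ : ℝ × ℝ → ℂ) (x : ℝ × ℝ) : ℝ :=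
  ((starRingEnd ℂ) (ψ x) * covD1 a ψ x).im

/-- Supercurrent component J₂ = Im(conj(ψ)·D₂ψ). -/
def supJ2 (a : ℝ × ℝ → ℝ × ℝ) (ψ : ℝ × ℝ → ℂ) (x : ℝ × ℝ) : ℝ :=
  ((starRingEnd ℂ) (ψ x) * covD2 a ψ x).im

/-! For a covariant derivative `D = ∂_w + i b` with `b` real, `∂_w Im(ψ̄ Dψ) = Im(ψ̄ D(Dψ))`:
the two sides differ by `Im |Dψ|² = 0`. Summing over both directions, `div J = Im(ψ̄ Δ_a ψ)`,
and on a solution `Δ_a ψ = (v(|ψ|²) − a₀) ψ`, so `ψ̄ Δ_a ψ = (v(|ψ|²) − a₀) |ψ|²` is real. -/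

open ComplexConjugate

theorem differentiable_fderiv_apply {E F : Type*} [NormedAddCommGroup E] [NormedSpace ℝ E]
    [NormedAddCommGroup F] [NormedSpace ℝ F] {f : E → F} (hf : ContDiff ℝ 2 f) (w : E) :
    Differentiable ℝ (fun y => fderiv ℝ f y w) :=
  ((hf.fderiv_right (m := 1) (by norm_num)).differentiable one_ne_zero).clm_apply
    (differentiable_const w)

theorem im_conj_mul_ofReal_mul_self (z : ℂ) (r : ℝ) : (conj z * (r * z)).im = 0 := by
  rw [mul_left_comm, conj_mul', ← ofReal_pow, ← ofReal_mul, ofReal_im]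

section

variable {E : Type*} [NormedAddCommGroup E] [NormedSpace ℝ E]

theorem fderiv_im_conj_mul_apply {f g : E → ℂ} {x : E} (hf : DifferentiableAt ℝ f x)
    (hg : DifferentiableAt ℝ g x) (w : E) :
    fderiv ℝ (fun y => (conj (f y) * g y).im) x w
      = (conj (fderiv ℝ f x w) * g x + conj (f x) * fderiv ℝ g x w).im := by
  have hconj : HasFDerivAt (fun y => conj (f y))
      (conjCLE.toContinuousLinearMap.comp (fderiv ℝ f x)) x :=
    conjCLE.hasFDerivAt.comp x hf.hasFDerivAt
  have him : HasFDerivAt (fun y => (conj (f y) * g y).im) _ x :=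
    imCLM.hasFDerivAt.comp x (hconj.mul hg.hasFDerivAt)
  rw [him.fderiv]
  simp only [ContinuousLinearMap.comp_apply, add_apply,
    smul_apply, smul_eq_mul, imCLM_apply, ContinuousLinearEquiv.coe_coe,
    conjCLE_apply]
  rw [add_comm, mul_comm (g x)]

theorem fderiv_im_conj_mul_covariant_apply {ψ φ : E → ℂ} {b : ℝ} {x w : E}
    (hψ : DifferentiableAt ℝ ψ x) (hφ : DifferentiableAt ℝ φ x)
    (hφx : φ x = fderiv ℝ ψ x w + I * b * ψ x) :
    fderiv ℝ (fun y => (conj (ψ y) * φ y).im) x w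
      = (conj (ψ x) * (fderiv ℝ φ x w + I * b * φ x)).im := by
  have hdψ : fderiv ℝ ψ x w = φ x - I * b * ψ x := by rw [hφx]; ring
  have expand : conj (φ x - I * b * ψ x) * φ x + conj (ψ x) * fderiv ℝ φ x w
      = conj (φ x) * φ x + conj (ψ x) * (fderiv ℝ φ x w + I * b * φ x) := by
    simp only [map_sub, map_mul, conj_I, conj_ofReal]; ring
  rw [fderiv_im_conj_mul_apply hψ hφ, hdψ, expand, add_im, conj_mul', ← ofReal_pow, ofReal_im,
    zero_add]

end

section

variable {a : ℝ × ℝ → ℝ × ℝ} {ψ : ℝ × ℝ → ℂ}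

theorem differentiable_covD1 (ha : Differentiable ℝ a) (hψ : ContDiff ℝ 2 ψ) :
    Differentiable ℝ (covD1 a ψ) :=
  (differentiable_fderiv_apply hψ _).add
    (((differentiable_ofReal.comp ha.fst).const_mul I).mul (hψ.differentiable two_ne_zero))

theorem differentiable_covD2 (ha : Differentiable ℝ a) (hψ : ContDiff ℝ 2 ψ) :
    Differentiable ℝ (covD2 a ψ) :=
  (differentiable_fderiv_apply hψ _).add
    (((differentiable_ofReal.comp ha.snd).const_mul I).mul (hψ.differentiable two_ne_zero))

theorem pd1r_supJ1 (ha : Differentiable ℝ a) (hψ : ContDiff ℝ 2 ψ) (x : ℝ × ℝ) :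
    pd1r (supJ1 a ψ) x = (conj (ψ x) * covD1 a (covD1 a ψ) x).im :=
  fderiv_im_conj_mul_covariant_apply (hψ.differentiable two_ne_zero x)
    (differentiable_covD1 ha hψ x) rfl

theorem pd2r_supJ2 (ha : Differentiable ℝ a) (hψ : ContDiff ℝ 2 ψ) (x : ℝ × ℝ) :
    pd2r (supJ2 a ψ) x = (conj (ψ x) * covD2 a (covD2 a ψ) x).im :=
  fderiv_im_conj_mul_covariant_apply (hψ.differentiable two_ne_zero x)
    (differentiable_covD2 ha hψ x) rfl

theorem pd1r_supJ1_add_pd2r_supJ2 (ha : Differentiable ℝ a) (hψ : ContDiff ℝ 2 ψ) (x : ℝ × ℝ) :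
    pd1r (supJ1 a ψ) x + pd2r (supJ2 a ψ) x = (conj (ψ x) * magLap a ψ x).im := by
  rw [pd1r_supJ1 ha hψ, pd2r_supJ2 ha hψ, magLap, mul_add, add_im]

end

theorem supercurrent_divergence_free_of_ZHK_general
    (a : ℝ × ℝ → ℝ × ℝ) (a₀ : ℝ × ℝ → ℝ) (v : ℝ → ℝ) (ψ : ℝ × ℝ → ℂ)
    (ha : ContDiff ℝ 1 a) (hψ : ContDiff ℝ 2 ψ)
    (heq : ∀ x : ℝ × ℝ,
      -(magLap a ψ x) + (v (‖ψ x‖ ^ 2) : ℂ) * ψ x - (a₀ x : ℂ) * ψ x = 0) :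
    ∀ x : ℝ × ℝ, pd1r (supJ1 a ψ) x + pd2r (supJ2 a ψ) x = 0 := by
  intro x
  have hLap : magLap a ψ x = ((v (‖ψ x‖ ^ 2) - a₀ x : ℝ) : ℂ) * ψ x := by
    push_cast
    linear_combination -heq x
  rw [pd1r_supJ1_add_pd2r_supJ2 (ha.differentiable one_ne_zero) hψ, hLap,
    im_conj_mul_ofReal_mul_self]

/-- For a solution of the stationary ZHK equation
`−Δ_aψ + v(|ψ|²)ψ − a₀ψ = 0`, the supercurrent is divergence free. -/
theorem supercurrent_divergence_free_of_ZHK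
    (a : ℝ × ℝ → ℝ × ℝ) (a₀ : ℝ × ℝ → ℝ) (v : ℝ → ℝ) (ψ : ℝ × ℝ → ℂ)
    (ha : ContDiff ℝ 1 a) (ha₀ : Continuous a₀) (hψ : ContDiff ℝ 2 ψ)
    (heq : ∀ x : ℝ × ℝ,
      -(magLap a ψ x) + (v (‖ψ x‖ ^ 2) : ℂ) * ψ x - (a₀ x : ℂ) * ψ x = 0) :
    ∀ x : ℝ × ℝ, pd1r (supJ1 a ψ) x + pd2r (supJ2 a ψ) x = 0 :=
  supercurrent_divergence_free_of_ZHK_general a a₀ v ψ ha hψ heq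
end
end

section
/- Let v₁, v₂ ∈ ℝ² be linearly independent with fundamental cell P = {t₁v₁ + t₂v₂ : t₁,t₂ ∈ [0,1)} of area |P|, let b, b' ∈ ℝ with b'·|P| = 2πn for some n ∈ ℤ. Let ψ : ℝ² → ℂ be continuous with |ψ(x + v_j)| = |ψ(x)| for j = 1,2 and all x, and let a : ℝ² → ℝ² be continuously differentiable and satisfy a(x + v_j) = a(x) + (b'/2)·(−(v_j)₂, (v_j)₁) for j = 1,2 and all x, together with the Chern-Simons constraint curl a(x) = b − (1/2)|ψ(x)|² for all x. Then the charge per cell is quantized: ∫_P (1/2)|ψ|² dx = b·|P| − 2πn; equivalently, ∫_P ((1/2)|ψ|² − b) dx = −2πn ∈ 2πℤ. -/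
noncomputable section

open Complex

open MeasureTheory

/-- Fundamental parallelogram `{t₁v₁ + t₂v₂ : t₁, t₂ ∈ [0,1)}` of the lattice
generated by `v₁, v₂`. -/
def fundCell (v₁ v₂ : ℝ × ℝ) : Set (ℝ × ℝ) :=
  {x : ℝ × ℝ | ∃ t₁ t₂ : ℝ, t₁ ∈ Set.Ico (0 : ℝ) 1 ∧ t₂ ∈ Set.Ico (0 : ℝ) 1
    ∧ x = t₁ • v₁ + t₂ • v₂}

/-! Pull the vector potential back to the unit square along `T t = t₁v₁ + t₂v₂`: the
pulled-back 1-form has curl `det T · (curl a) ∘ T`, and Green's theorem on the unit square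
reduces its integral to boundary terms. Quasi-periodicity of `a` makes opposite sides differ by
constants, which add up to the flux `b' · det T`; hence `∫_P curl a = b' |P| = 2πn`, and
integrating the constraint `½|ψ|² = b − curl a` over `P` gives the charge. -/

open Set

theorem curl2_eq_fderiv {a : ℝ × ℝ → ℝ × ℝ} {x : ℝ × ℝ} (ha : DifferentiableAt ℝ a x) :
    curl2 a x = (fderiv ℝ a x (1, 0)).2 - (fderiv ℝ a x (0, 1)).1 := by
  simp [curl2, pd1r, pd2r, ha.hasFDerivAt.fst.fderiv, ha.hasFDerivAt.snd.fderiv]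

theorem continuous_curl2 {a : ℝ × ℝ → ℝ × ℝ} (ha : ContDiff ℝ 1 a) : Continuous (curl2 a) := by
  have h₁ := (contDiff_snd.comp ha).continuous_fderiv one_ne_zero
  have h₂ := (contDiff_fst.comp ha).continuous_fderiv one_ne_zero
  exact (h₁.clm_apply continuous_const).sub (h₂.clm_apply continuous_const)

theorem integral_Icc_curl2_of_add_const {A : ℝ × ℝ → ℝ × ℝ} (hA : ContDiff ℝ 1 A)
    {p q : ℝ × ℝ} (hpq : p ≤ q) {c₁ c₂ : ℝ}
    (h₁ : ∀ y, (A (q.1, y)).2 = (A (p.1, y)).2 + c₁)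
    (h₂ : ∀ x, (A (x, q.2)).1 = (A (x, p.2)).1 + c₂) :
    ∫ x in Icc p q, curl2 A x = (q.2 - p.2) * c₁ - (q.1 - p.1) * c₂ := by
  have hf : ContDiff ℝ 1 fun x => (A x).2 := contDiff_snd.comp hA
  have hg : ContDiff ℝ 1 fun x => -(A x).1 := (contDiff_fst.comp hA).neg
  have hcurl : ∀ x, curl2 A x = fderiv ℝ (fun x => (A x).2) x (1, 0)
      + fderiv ℝ (fun x => -(A x).1) x (0, 1) := fun x => by
    simp [curl2, pd1r, pd2r, sub_eq_add_neg]
  simp_rw [hcurl]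
  rw [integral_divergence_prod_Icc_of_hasFDerivAt_off_countable_of_le _ _ _ _ p q hpq ∅
    countable_empty hf.continuous.continuousOn hg.continuous.continuousOn
    (fun x _ => (hf.differentiable one_ne_zero x).hasFDerivAt)
    (fun x _ => (hg.differentiable one_ne_zero x).hasFDerivAt)
    ((continuous_curl2 hA).integrableOn_Icc.congr_fun (fun x _ => hcurl x) measurableSet_Icc)]
  have hc₁ : Continuous fun y => (A (p.1, y)).2 := by fun_prop
  have hc₂ : Continuous fun x => -(A (x, p.2)).1 := by fun_prop
  simp only [h₁, h₂, neg_add]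
  rw [intervalIntegral.integral_add (hc₁.intervalIntegrable _ _) intervalIntegrable_const,
    intervalIntegral.integral_add (hc₂.intervalIntegrable _ _) intervalIntegrable_const]
  simp
  ring

def latticeMap (v₁ v₂ : ℝ × ℝ) : ℝ × ℝ →L[ℝ] ℝ × ℝ :=
  (ContinuousLinearMap.fst ℝ ℝ ℝ).smulRight v₁ + (ContinuousLinearMap.snd ℝ ℝ ℝ).smulRight v₂

@[simp]
theorem latticeMap_apply (v₁ v₂ t : ℝ × ℝ) : latticeMap v₁ v₂ t = t.1 • v₁ + t.2 • v₂ := rfl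

theorem det_latticeMap (v₁ v₂ : ℝ × ℝ) :
    (latticeMap v₁ v₂).det = v₁.1 * v₂.2 - v₁.2 * v₂.1 := by
  rw [ContinuousLinearMap.det, ← LinearMap.det_toMatrix (Module.Basis.finTwoProd ℝ),
    Matrix.det_fin_two]
  simp [LinearMap.toMatrix_apply]
  ring

theorem latticeMap_injective {v₁ v₂ : ℝ × ℝ} (h : LinearIndependent ℝ ![v₁, v₂]) :
    Function.Injective (latticeMap v₁ v₂) := by
  refine (injective_iff_map_eq_zero _).2 fun t ht => ?_
  obtain ⟨h₁, h₂⟩ := LinearIndependent.pair_iff.1 h t.1 t.2 ht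
  exact Prod.ext h₁ h₂

theorem fundCell_eq_image (v₁ v₂ : ℝ × ℝ) :
    fundCell v₁ v₂ = latticeMap v₁ v₂ '' (Ico 0 1 ×ˢ Ico 0 1) := by
  ext x
  simp [fundCell, eq_comm, and_assoc]

theorem fundCell_subset_image_Icc (v₁ v₂ : ℝ × ℝ) :
    fundCell v₁ v₂ ⊆ latticeMap v₁ v₂ '' Icc 0 1 := by
  rw [fundCell_eq_image, Icc_prod_eq]
  exact image_mono (prod_mono Ico_subset_Icc_self Ico_subset_Icc_self)

theorem Continuous.integrableOn_fundCell {f : ℝ × ℝ → ℝ} (hf : Continuous f) (v₁ v₂ : ℝ × ℝ) :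
    IntegrableOn f (fundCell v₁ v₂) :=
  (hf.continuousOn.integrableOn_compact
    (isCompact_Icc.image (latticeMap v₁ v₂).continuous)).mono_set (fundCell_subset_image_Icc v₁ v₂)

theorem volume_fundCell (v₁ v₂ : ℝ × ℝ) :
    volume (fundCell v₁ v₂) = ENNReal.ofReal |v₁.1 * v₂.2 - v₁.2 * v₂.1| := by
  rw [fundCell_eq_image, Measure.addHaar_image_continuousLinearMap, ← ContinuousLinearMap.det,
    det_latticeMap, Measure.volume_eq_prod, Measure.prod_prod]
  simp

theorem setIntegral_fundCell {v₁ v₂ : ℝ × ℝ} (h : LinearIndependent ℝ ![v₁, v₂])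
    (g : ℝ × ℝ → ℝ) :
    ∫ x in fundCell v₁ v₂, g x
      = |v₁.1 * v₂.2 - v₁.2 * v₂.1| * ∫ t in Icc 0 1, g (latticeMap v₁ v₂ t) := by
  have hae : (Ico 0 1 ×ˢ Ico 0 1 : Set (ℝ × ℝ)) =ᵐ[volume] Icc 0 1 := by
    rw [Icc_prod_eq, Measure.volume_eq_prod]
    exact Measure.set_prod_ae_eq Ico_ae_eq_Icc Ico_ae_eq_Icc
  rw [fundCell_eq_image, integral_image_eq_integral_abs_det_fderiv_smul volume
    (measurableSet_Ico.prod measurableSet_Ico)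
    (fun t _ => (latticeMap v₁ v₂).hasFDerivAt.hasFDerivWithinAt)
    (latticeMap_injective h).injOn, setIntegral_congr_set hae]
  simp [det_latticeMap, integral_const_mul]

/-- `latticeMap (v₁.1, v₂.1) (v₁.2, v₂.2)` is the transpose of `T = latticeMap v₁ v₂`, so this is
the pull-back `Tᵀ ∘ a ∘ T` of the 1-form `a` along `T`. -/
def latticePullback (v₁ v₂ : ℝ × ℝ) (a : ℝ × ℝ → ℝ × ℝ) (t : ℝ × ℝ) : ℝ × ℝ :=
  latticeMap (v₁.1, v₂.1) (v₁.2, v₂.2) (a (latticeMap v₁ v₂ t))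

theorem ContDiff.latticePullback {a : ℝ × ℝ → ℝ × ℝ} (ha : ContDiff ℝ 1 a) (v₁ v₂ : ℝ × ℝ) :
    ContDiff ℝ 1 (latticePullback v₁ v₂ a) :=
  (latticeMap _ _).contDiff.comp (ha.comp (latticeMap v₁ v₂).contDiff)

theorem curl2_latticePullback {a : ℝ × ℝ → ℝ × ℝ} {v₁ v₂ t : ℝ × ℝ}
    (ha : DifferentiableAt ℝ a (latticeMap v₁ v₂ t)) :
    curl2 (latticePullback v₁ v₂ a) t
      = (v₁.1 * v₂.2 - v₁.2 * v₂.1) * curl2 a (latticeMap v₁ v₂ t) := by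
  have hpull : HasFDerivAt (latticePullback v₁ v₂ a) ((latticeMap (v₁.1, v₂.1) (v₁.2, v₂.2)).comp
      ((fderiv ℝ a (latticeMap v₁ v₂ t)).comp (latticeMap v₁ v₂))) t :=
    (latticeMap _ _).hasFDerivAt.comp t (ha.hasFDerivAt.comp t (latticeMap v₁ v₂).hasFDerivAt)
  rw [curl2_eq_fderiv hpull.differentiableAt, curl2_eq_fderiv ha, hpull.fderiv]
  set D := fderiv ℝ a (latticeMap v₁ v₂ t)
  have hD : ∀ v : ℝ × ℝ, D v = v.1 • D (1, 0) + v.2 • D (0, 1) := fun v => by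
    rw [← map_smul, ← map_smul, ← map_add]; simp
  have he₁ : latticeMap v₁ v₂ (1, 0) = v₁ := by simp
  have he₂ : latticeMap v₁ v₂ (0, 1) = v₂ := by simp
  simp only [ContinuousLinearMap.comp_apply, he₁, he₂]
  rw [hD v₁, hD v₂]
  simp
  ring

theorem integral_fundCell_curl2 {v₁ v₂ : ℝ × ℝ} (h : LinearIndependent ℝ ![v₁, v₂]) {b' : ℝ}
    {a : ℝ × ℝ → ℝ × ℝ} (ha : ContDiff ℝ 1 a)
    (ha₁ : ∀ x : ℝ × ℝ, a (x + v₁) = a x + (b' / 2) • (-v₁.2, v₁.1))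
    (ha₂ : ∀ x : ℝ × ℝ, a (x + v₂) = a x + (b' / 2) • (-v₂.2, v₂.1)) :
    ∫ x in fundCell v₁ v₂, curl2 a x = b' * |v₁.1 * v₂.2 - v₁.2 * v₂.1| := by
  set d := v₁.1 * v₂.2 - v₁.2 * v₂.1
  have h₁ : ∀ y, (latticePullback v₁ v₂ a (1, y)).2
      = (latticePullback v₁ v₂ a (0, y)).2 + b' / 2 * d := by
    intro y
    have : latticeMap v₁ v₂ (1, y) = latticeMap v₁ v₂ (0, y) + v₁ := by simp; abel
    simp only [latticePullback, this, ha₁]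
    simp [d]; ring
  have h₂ : ∀ x, (latticePullback v₁ v₂ a (x, 1)).1
      = (latticePullback v₁ v₂ a (x, 0)).1 + -(b' / 2 * d) := by
    intro x
    have : latticeMap v₁ v₂ (x, 1) = latticeMap v₁ v₂ (x, 0) + v₂ := by simp
    simp only [latticePullback, this, ha₂]
    simp [d]; ring
  have hgreen := integral_Icc_curl2_of_add_const (ha.latticePullback v₁ v₂) zero_le_one h₁ h₂
  simp only [curl2_latticePullback (ha.differentiable one_ne_zero _), integral_const_mul,
    Prod.fst_one, Prod.snd_one, Prod.fst_zero, Prod.snd_zero, sub_zero, one_mul] at hgreen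
  rw [setIntegral_fundCell h]
  rcases abs_choice d with hd | hd <;> rw [hd]
  · linear_combination hgreen
  · linear_combination -hgreen

theorem ZHK_charge_quantization_general
    (v₁ v₂ : ℝ × ℝ) (hind : LinearIndependent ℝ ![v₁, v₂])
    (b b' : ℝ) (n : ℤ)
    (hb' : b' * |v₁.1 * v₂.2 - v₁.2 * v₂.1| = 2 * Real.pi * n)
    (ψ : ℝ × ℝ → ℂ)
    (a : ℝ × ℝ → ℝ × ℝ) (ha : ContDiff ℝ 1 a)
    (ha₁ : ∀ x : ℝ × ℝ, a (x + v₁) = a x + (b' / 2) • (-v₁.2, v₁.1))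
    (ha₂ : ∀ x : ℝ × ℝ, a (x + v₂) = a x + (b' / 2) • (-v₂.2, v₂.1))
    (hconstr : ∀ x : ℝ × ℝ, curl2 a x = b - (1 / 2) * ‖ψ x‖ ^ 2) :
    (∫ x in fundCell v₁ v₂, (1 / 2) * ‖ψ x‖ ^ 2
        = b * |v₁.1 * v₂.2 - v₁.2 * v₂.1| - 2 * Real.pi * n)
    ∧ ∫ x in fundCell v₁ v₂, ((1 / 2) * ‖ψ x‖ ^ 2 - b)
        = -(2 * Real.pi * n) := by
  have hflux := integral_fundCell_curl2 hind ha ha₁ ha₂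
  have hb : ∫ _ in fundCell v₁ v₂, b = b * |v₁.1 * v₂.2 - v₁.2 * v₂.1| := by
    simp [measureReal_def, volume_fundCell, mul_comm]
  have hρ : ∀ x, 1 / 2 * ‖ψ x‖ ^ 2 = b - curl2 a x := fun x => by rw [hconstr]; ring
  simp only [hρ, sub_sub_cancel_left, integral_neg, hflux, hb', and_true]
  rw [integral_sub (continuous_const.integrableOn_fundCell v₁ v₂)
    ((continuous_curl2 ha).integrableOn_fundCell v₁ v₂), hb, hflux, hb']

/-- Charge quantization per lattice cell: under the Chern-Simons constraint
`curl a = b − (1/2)|ψ|²` and flux quantization `b'·|P| = 2πn`,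
`∫_P (1/2)|ψ|² = b·|P| − 2πn`, i.e. `∫_P ((1/2)|ψ|² − b) = −2πn ∈ 2πℤ`. -/
theorem ZHK_charge_quantization
    (v₁ v₂ : ℝ × ℝ) (hind : LinearIndependent ℝ ![v₁, v₂])
    (b b' : ℝ) (n : ℤ)
    (hb' : b' * |v₁.1 * v₂.2 - v₁.2 * v₂.1| = 2 * Real.pi * n)
    (ψ : ℝ × ℝ → ℂ) (hψ : Continuous ψ)
    (hψ₁ : ∀ x : ℝ × ℝ, ‖ψ (x + v₁)‖ = ‖ψ x‖)
    (hψ₂ : ∀ x : ℝ × ℝ, ‖ψ (x + v₂)‖ = ‖ψ x‖)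
    (a : ℝ × ℝ → ℝ × ℝ) (ha : ContDiff ℝ 1 a)
    (ha₁ : ∀ x : ℝ × ℝ, a (x + v₁) = a x + (b' / 2) • (-v₁.2, v₁.1))
    (ha₂ : ∀ x : ℝ × ℝ, a (x + v₂) = a x + (b' / 2) • (-v₂.2, v₂.1))
    (hconstr : ∀ x : ℝ × ℝ, curl2 a x = b - (1 / 2) * ‖ψ x‖ ^ 2) :
    (∫ x in fundCell v₁ v₂, (1 / 2) * ‖ψ x‖ ^ 2
        = b * |v₁.1 * v₂.2 - v₁.2 * v₂.1| - 2 * Real.pi * n)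
    ∧ ∫ x in fundCell v₁ v₂, ((1 / 2) * ‖ψ x‖ ^ 2 - b)
        = -(2 * Real.pi * n) :=
  ZHK_charge_quantization_general v₁ v₂ hind b b' n hb' ψ a ha ha₁ ha₂ hconstr
end
end
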